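/- arXiv:1703.10525 — 3 statements merged into one kernel-verified Lean document; each statement's English description precedes it below -/
import Mathlib

section
/- Let k be a Γ-graded commutative field (Γ a multiplicatively written, divisible, torsion-free, ordered abelian group with an adjoined absorbing element 0). Let χ₁, …, χₙ be n pairwise distinct automorphisms of graded fields of k, let ρ ∈ Γ, and let a₁, …, aₙ be elements of the homogeneous component k_ρ. Then a₁χ₁ + a₂χ₂ + … + aₙχₙ = 0 (as a function on homogeneous elements of k) if and only if aᵢ = 0 for all i. (Graded analogue of Dedekind's linear independence of characters.) -/
/-- A `Γ`-graded field structure on a commutative ring `A` (in the homogeneous-elements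
formalism): a family of additive subgroups of homogeneous components such that
`1` is homogeneous of degree `1`, products multiply degrees, a nonzero element is
homogeneous of at most one degree, and every nonzero homogeneous element has a
homogeneous inverse of inverse degree. -/
structure GradedField (Γ : Type*) [CommGroup Γ] (A : Type*) [CommRing A] where
  deg : Γ → AddSubgroup A
  one_mem : (1 : A) ∈ deg 1
  mul_mem : ∀ {r s : Γ} {x y : A}, x ∈ deg r → y ∈ deg s → x * y ∈ deg (r * s)
  deg_unique : ∀ {r s : Γ} {x : A}, x ∈ deg r → x ∈ deg s → x ≠ 0 → r = s
  inv_mem : ∀ {r : Γ} {x : A}, x ∈ deg r → x ≠ 0 → ∃ y ∈ deg r⁻¹, x * y = 1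

/-!
Dedekind's argument, by induction on the number of characters. If `∑ aᵢ χᵢ` vanishes on
homogeneous elements and `y` is homogeneous, then so does `∑ aᵢ (χᵢ y - χⱼ y) χᵢ`, whose
`j`-th term is gone and whose coefficients still share a degree. Choosing `y` with `χᵢ y ≠ χⱼ y`, the
induction hypothesis gives `aᵢ (χᵢ y - χⱼ y) = 0`, and `χᵢ y - χⱼ y` is a nonzero homogeneous
element, hence invertible.
-/

open Finset

namespace GradedField

variable {Γ A : Type*} [CommGroup Γ] [CommRing A] (K : GradedField Γ A)

theorem eq_zero_of_mul_eq_zero {s : Γ} {a c : A} (hc : c ∈ K.deg s) (hc0 : c ≠ 0)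
    (h : a * c = 0) : a = 0 := by
  obtain ⟨d, -, hcd⟩ := K.inv_mem hc hc0
  calc a = a * c * d := by rw [mul_assoc, hcd, mul_one]
    _ = 0 := by rw [h, zero_mul]

theorem sum_mul_sub_mul_map_eq_zero {ι : Type*} (s : Finset ι) (χ : ι → A →+* A) (a : ι → A)
    (h : ∀ (r : Γ) (x : A), x ∈ K.deg r → ∑ i ∈ s, a i * χ i x = 0)
    {t : Γ} {y : A} (hy : y ∈ K.deg t) (c : A) (r : Γ) {x : A} (hx : x ∈ K.deg r) :
    ∑ i ∈ s, a i * (χ i y - c) * χ i x = 0 := by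
  calc ∑ i ∈ s, a i * (χ i y - c) * χ i x
      = ∑ i ∈ s, a i * χ i (y * x) - c * ∑ i ∈ s, a i * χ i x := by
        rw [mul_sum, ← sum_sub_distrib]
        refine sum_congr rfl fun i _ => ?_
        rw [map_mul]
        ring
    _ = 0 := by rw [h _ _ (K.mul_mem hy hx), h r x hx, mul_zero, sub_zero]

theorem eq_zero_of_sum_mul_map_eq_zero {ι : Type*} [DecidableEq ι] (χ : ι → A →+* A)
    (hχ : ∀ (i : ι) (r : Γ) (x : A), x ∈ K.deg r → χ i x ∈ K.deg r)
    (hdist : ∀ i j : ι, i ≠ j → ∃ (r : Γ) (x : A), x ∈ K.deg r ∧ χ i x ≠ χ j x)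
    (s : Finset ι) {ρ : Γ} {a : ι → A} (ha : ∀ i ∈ s, a i ∈ K.deg ρ)
    (h : ∀ (r : Γ) (x : A), x ∈ K.deg r → ∑ i ∈ s, a i * χ i x = 0) :
    ∀ i ∈ s, a i = 0 := by
  induction s using Finset.induction_on generalizing ρ a with
  | empty => simp
  | @insert j t hj ih =>
    have ht : ∀ i ∈ t, a i = 0 := by
      intro i hi
      obtain ⟨r, y, hy, hne⟩ := hdist i j (ne_of_mem_of_not_mem hi hj)
      have hdiff : ∀ k, χ k y - χ j y ∈ K.deg r := fun k => sub_mem (hχ k r y hy) (hχ j r y hy)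
      refine K.eq_zero_of_mul_eq_zero (hdiff i) (sub_ne_zero.2 hne) ?_
      refine ih (ρ := ρ * r) (a := fun k => a k * (χ k y - χ j y))
        (fun k hk => K.mul_mem (ha k (mem_insert_of_mem hk)) (hdiff k)) (fun r' x hx => ?_) i hi
      have := K.sum_mul_sub_mul_map_eq_zero _ χ a h hy (χ j y) r' hx
      rwa [sum_insert hj, sub_self, mul_zero, zero_mul, zero_add] at this
    have hj0 : a j = 0 := by
      have := h 1 1 K.one_mem
      rwa [sum_insert hj, sum_eq_zero fun i hi => by rw [ht i hi, zero_mul], map_one, mul_one,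
        add_zero] at this
    intro i hi
    rcases mem_insert.1 hi with rfl | hi
    exacts [hj0, ht i hi]

end GradedField

theorem statement0_general {Γ : Type*} [CommGroup Γ]
    {A : Type*} [CommRing A] (K : GradedField Γ A)
    (n : ℕ) (χ : Fin n → A ≃+* A)
    (hχ : ∀ (i : Fin n) (r : Γ) (x : A), x ∈ K.deg r → χ i x ∈ K.deg r)
    (hdist : ∀ i j : Fin n, i ≠ j → ∃ (r : Γ) (x : A), x ∈ K.deg r ∧ χ i x ≠ χ j x)
    (ρ : Γ) (a : Fin n → A) (ha : ∀ i, a i ∈ K.deg ρ) :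
    (∀ (r : Γ) (x : A), x ∈ K.deg r → ∑ i, a i * χ i x = 0) ↔ ∀ i, a i = 0 := by
  refine ⟨fun h i => ?_, fun h r x _ => by simp [h]⟩
  exact K.eq_zero_of_sum_mul_map_eq_zero (fun i => (χ i : A →+* A)) hχ hdist univ
    (fun i _ => ha i) h i (mem_univ i)

/-- **Graded linear independence of characters.**
Let `k` be a commutative graded field, graded by a divisible torsion-free ordered
abelian group `Γ` (written multiplicatively).  Let `χ 1, …, χ n` be pairwise distinct
automorphisms of the graded field, `ρ ∈ Γ` and `a 1, …, a n` elements of the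
homogeneous component of degree `ρ`.  Then `a₁χ₁ + ⋯ + aₙχₙ` vanishes on all
homogeneous elements iff all `aᵢ` vanish. -/
theorem statement0 {Γ : Type*} [CommGroup Γ] [LinearOrder Γ] [IsOrderedMonoid Γ]
    (hdiv : ∀ (a : Γ) (m : ℕ), 0 < m → ∃ b : Γ, b ^ m = a)
    {A : Type*} [CommRing A] (K : GradedField Γ A)
    (n : ℕ) (χ : Fin n → A ≃+* A)
    (hχ : ∀ (i : Fin n) (r : Γ) (x : A), x ∈ K.deg r → χ i x ∈ K.deg r)
    (hdist : ∀ i j : Fin n, i ≠ j → ∃ (r : Γ) (x : A), x ∈ K.deg r ∧ χ i x ≠ χ j x)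
    (ρ : Γ) (a : Fin n → A) (ha : ∀ i, a i ∈ K.deg ρ) :
    (∀ (r : Γ) (x : A), x ∈ K.deg r → ∑ i, a i * χ i x = 0) ↔ ∀ i, a i = 0 :=
  statement0_general K n χ hχ hdist ρ a ha
end

section
/- Let k be a complete non-Archimedean field and r = (r₁,…,rₙ) ∈ (ℝ₊ˣ)ⁿ. If the family (r₁,…,rₙ) is ℤ-linearly independent in the ℝ-vector space ℝ₊ˣ (multiplicative notation) modulo the value group |kˣ|, then every group action on the closed polydisc D_r by automorphisms preserving the spectral norm is residually affine; indeed the graded reduction factors as 𝒜̃_r = 𝒜̃_{(r₁)} ⊗_{k̃} ⋯ ⊗_{k̃} 𝒜̃_{(rₙ)} and any spectral-norm-preserving automorphism preserves each factor. -/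
/-!
An automorphism preserving the spectral norm sends `Tᵢ` to a series `f` with `‖f‖ = rᵢ`.
If some other coefficient `a_I` also attained the norm, `‖a_I‖ r^I = rᵢ` would put
`rᵢ / r^I = ∏ rⱼ^{δᵢⱼ - Iⱼ}` into `|kˣ|`, which independence forbids unless `I = eᵢ`.
So every term other than `eᵢ` lies strictly below the norm, i.e. the reduction of `g·Tᵢ`
is `c τᵢ`.
-/

open Filter

variable (k : Type*) [NontriviallyNormedField k] [IsUltrametricDist k] [CompleteSpace k]

/-- `r^I = ∏ rᵢ^{Iᵢ}` for a multi-index `I`. -/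
def rpowN {n : ℕ} (r : Fin n → ℝ) (I : Fin n →₀ ℕ) : ℝ := ∏ i, r i ^ (I i)

/-- The algebra `𝒜_r` of analytic functions on the closed polydisc of polyradius
`r`: power series whose coefficients satisfy `|a_I| r^I → 0`. -/
def ASet {n : ℕ} (r : Fin n → ℝ) : Set (MvPowerSeries (Fin n) k) :=
  {f | Tendsto (fun I : Fin n →₀ ℕ => ‖MvPowerSeries.coeff (R := k) I f‖ * rpowN r I)
      cofinite (nhds 0)}

/-- The spectral (Gauss) norm on the polydisc of polyradius `r`. -/
noncomputable def spnorm {n : ℕ} (r : Fin n → ℝ) (f : MvPowerSeries (Fin n) k) : ℝ :=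
  ⨆ I : Fin n →₀ ℕ, ‖MvPowerSeries.coeff (R := k) I f‖ * rpowN r I

/-- An automorphism of the function algebra of a closed polydisc. -/
def AlgIsoOn {n : ℕ} (φ : MvPowerSeries (Fin n) k → MvPowerSeries (Fin n) k)
    (S T : Set (MvPowerSeries (Fin n) k)) : Prop :=
  Set.BijOn φ S T ∧
  (∀ g ∈ S, ∀ h ∈ S, φ (g + h) = φ g + φ h ∧ φ (g * h) = φ g * φ h) ∧
  (∀ c : k, φ ((MvPowerSeries.C (σ := Fin n) (R := k)) c) = (MvPowerSeries.C (σ := Fin n) (R := k)) c)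

open MvPowerSeries

section

variable {n : ℕ} {r : Fin n → ℝ}

lemma rpowN_pos (hr : ∀ i, 0 < r i) (I : Fin n →₀ ℕ) : 0 < rpowN r I :=
  Finset.prod_pos fun j _ => pow_pos (hr j) _

lemma rpowN_single (i : Fin n) : rpowN r (Finsupp.single i 1) = r i := by
  classical
  simp [rpowN, Finsupp.single_apply, pow_ite]

lemma prod_zpow_sub_eq_div (hr : ∀ i, 0 < r i) (I J : Fin n →₀ ℕ) :
    ∏ j, r j ^ ((J j : ℤ) - I j) = rpowN r J / rpowN r I := by
  simp only [rpowN, ← Finset.prod_div_distrib]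
  refine Finset.prod_congr rfl fun j _ => ?_
  rw [zpow_sub₀ (hr j).ne', zpow_natCast, zpow_natCast]

variable {K : Type*} [NormedField K]

lemma eq_of_norm_mul_rpowN_eq (hr : ∀ i, 0 < r i)
    (hindep : ∀ a : Fin n → ℤ, (∃ x : K, x ≠ 0 ∧ ‖x‖ = ∏ i, r i ^ (a i)) → a = 0)
    {c : K} (hc : c ≠ 0) {I J : Fin n →₀ ℕ} (h : ‖c‖ * rpowN r I = rpowN r J) : I = J := by
  have hnorm : ‖c‖ = ∏ j, r j ^ ((J j : ℤ) - I j) := by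
    rw [prod_zpow_sub_eq_div hr, eq_div_iff (rpowN_pos hr I).ne', h]
  have hzero := hindep _ ⟨c, hc, hnorm⟩
  ext j
  have hj := congrFun hzero j
  rw [Pi.zero_apply, sub_eq_zero] at hj
  exact_mod_cast hj.symm

lemma norm_coeff_X_mul_rpowN (i : Fin n) (I : Fin n →₀ ℕ) :
    ‖coeff I (X i : MvPowerSeries (Fin n) K)‖ * rpowN r I =
      if I = Finsupp.single i 1 then r i else 0 := by
  classical
  rw [coeff_X]
  split_ifs with h
  · simp [h, rpowN_single]
  · simp

end

section

variable {K : Type*} [NontriviallyNormedField K] {n : ℕ} {r : Fin n → ℝ}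

lemma norm_coeff_mul_rpowN_le_spnorm {f : MvPowerSeries (Fin n) K} (hf : f ∈ ASet K r)
    (I : Fin n →₀ ℕ) : ‖coeff I f‖ * rpowN r I ≤ spnorm K r f :=
  le_ciSup (Tendsto.bddAbove_range_of_cofinite hf) I

lemma X_mem_ASet (i : Fin n) : (X i : MvPowerSeries (Fin n) K) ∈ ASet K r := by
  refine tendsto_const_nhds.congr' ?_
  filter_upwards [(Set.finite_singleton (Finsupp.single i 1)).compl_mem_cofinite] with I hI
  rw [norm_coeff_X_mul_rpowN, if_neg (Set.mem_compl_singleton_iff.mp hI)]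

lemma spnorm_X (hr : ∀ i, 0 < r i) (i : Fin n) :
    spnorm K r (X i : MvPowerSeries (Fin n) K) = r i := by
  apply le_antisymm
  · refine ciSup_le fun I => ?_
    rw [norm_coeff_X_mul_rpowN]
    split_ifs
    exacts [le_rfl, (hr i).le]
  · simpa [norm_coeff_X_mul_rpowN, rpowN_single] using
      norm_coeff_mul_rpowN_le_spnorm (X_mem_ASet (K := K) i) (Finsupp.single i 1)

lemma norm_coeff_mul_rpowN_lt_spnorm (hr : ∀ i, 0 < r i)
    (hindep : ∀ a : Fin n → ℤ, (∃ x : K, x ≠ 0 ∧ ‖x‖ = ∏ i, r i ^ (a i)) → a = 0)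
    {f : MvPowerSeries (Fin n) K} (hf : f ∈ ASet K r) {J : Fin n →₀ ℕ}
    (hJ : spnorm K r f = rpowN r J) {I : Fin n →₀ ℕ} (hIJ : I ≠ J) :
    ‖coeff I f‖ * rpowN r I < spnorm K r f := by
  refine (norm_coeff_mul_rpowN_le_spnorm hf I).lt_of_ne fun h => hIJ ?_
  have hc : coeff I f ≠ 0 := by
    rintro h0
    rw [h0, norm_zero, zero_mul, hJ] at h
    exact (rpowN_pos hr J).ne h
  exact eq_of_norm_mul_rpowN_eq hr hindep hc (h.trans hJ)

end

theorem statement12 (n : ℕ) (r : Fin n → ℝ) (hr : ∀ i, 0 < r i)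
    (hindep : ∀ a : Fin n → ℤ, (∃ x : k, x ≠ 0 ∧ ‖x‖ = ∏ i, r i ^ (a i)) → a = 0)
    {G : Type*}
    (act : G → MvPowerSeries (Fin n) k → MvPowerSeries (Fin n) k)
    (hiso : ∀ g : G, AlgIsoOn k (act g) (ASet k r) (ASet k r))
    (hnorm : ∀ (g : G), ∀ x ∈ ASet k r, spnorm k r (act g x) = spnorm k r x) :
    ∀ (g : G) (i : Fin n),
      (∀ I : Fin n →₀ ℕ, I ≠ 0 → (∀ j, I ≠ Finsupp.single j 1) →
        ‖MvPowerSeries.coeff (R := k) I (act g (MvPowerSeries.X i))‖ * rpowN r I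
          < spnorm k r (act g (MvPowerSeries.X i))) ∧
      (∀ I : Fin n →₀ ℕ, (∃ j, j ≠ i ∧ I j ≠ 0) →
        ‖MvPowerSeries.coeff (R := k) I (act g (MvPowerSeries.X i))‖ * rpowN r I
          < spnorm k r (act g (MvPowerSeries.X i))) := by
  intro g i
  have hmem : act g (X i) ∈ ASet k r := (hiso g).1.mapsTo (X_mem_ASet i)
  have hspnorm : spnorm k r (act g (X i)) = rpowN r (Finsupp.single i 1) := by
    rw [hnorm g _ (X_mem_ASet i), spnorm_X hr, rpowN_single]
  have hlt := fun I => norm_coeff_mul_rpowN_lt_spnorm hr hindep hmem hspnorm (I := I)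
  refine ⟨fun I _ hI => hlt I (hI i), ?_⟩
  rintro I ⟨j, hji, hIj⟩
  refine hlt I fun hI => hIj ?_
  rw [hI, Finsupp.single_eq_of_ne hji]
end

section
/- Let k = ℚ₃ and L = ℚ₃[i]. The ℚ₃-analytic space X = {x ∈ ℙ^{1,an}_{ℚ₃} : 1/4 ≤ |(T²+1)(x)|} is not a ℚ₃-annulus, but X_L = {x ∈ ℙ^{1,an}_{L} : 1/2 ≤ |((T+i)/(T−i))(x)| ≤ 2} is an L-annulus with coordinate f = (T+i)/(T−i); the complex-conjugation generator σ of Gal(L/k) satisfies σ(f) = −f and thus acts nontrivially on the lattice of X_L (it reverses the orientation of the analytic skeleton). Hence the lattice-triviality hypothesis in the descent theorem for laces cannot be dropped. -/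
/-!
In the coordinate `f` the Galois action is the twist `∑ a_I T^I ↦ ∑ σ(a_I) T^{-I}`. It preserves
`𝒜_U` because `U = [1/2, 2]` is stable under `ρ ↦ ρ⁻¹` and `σ` is an isometry, and it sends the
coordinate `T` to `T⁻¹`, whose class in the lattice differs from that of `T`: a unit `1 + u` with
`u` spectrally small has constant coefficient of norm `1`, so it cannot supply the zero
coefficient that `T⁻¹` has at `T`. A twist-invariant series has `‖a_I‖ = ‖a_{-I}‖`, so at the
point `ρ = 1` of `U` neither `T` nor `T⁻¹` can dominate it strictly. Finally a square root of
`-1` in `ℚ₃` would be `±i`, hence fixed by `σ`, contradicting `σ i = -i`.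
-/

open Filter

section Lace

/-- Multivariate Laurent series over `k`: coefficient families indexed by `ℤⁿ`. -/
abbrev Lser (n : ℕ) (k : Type*) := (Fin n → ℤ) → k

variable (k : Type*) [NontriviallyNormedField k] [IsUltrametricDist k] [CompleteSpace k]

/-- `ρ^I = ∏ |ρᵢ|^{Iᵢ}` for `I ∈ ℤⁿ` (for `ρ` with positive coordinates, as is
always the case below, this is `∏ ρᵢ^{Iᵢ}`). -/
noncomputable def rpowZ {n : ℕ} (ρ : Fin n → ℝ) (I : Fin n → ℤ) : ℝ := ∏ i, |ρ i| ^ (I i)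

/-- Multiplication of Laurent series, the coefficients of the product being
computed as convergent sums in the complete ultrametric field `k`. -/
noncomputable def lmul {n : ℕ} (f g : Lser n k) : Lser n k :=
  fun I => ∑' J : Fin n → ℤ, f J * g (I - J)

/-- The unit Laurent series. -/
def lone {n : ℕ} : Lser n k := fun I => if I = 0 then 1 else 0

/-- The monomial `T^I`. -/
def lmono {n : ℕ} (I : Fin n → ℤ) : Lser n k := fun J => if J = I then 1 else 0

/-- The coordinate function `Tᵢ`. -/
def lX {n : ℕ} (i : Fin n) : Lser n k := lmono k (Pi.single i 1)

/-- Membership in the algebra `𝒜_U` of analytic functions on the lace `D_U`: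
`|a_I| ρ^I → 0` for every `ρ ∈ U`. -/
def InA {n : ℕ} (U : Set (Fin n → ℝ)) (f : Lser n k) : Prop :=
  ∀ ρ ∈ U, Tendsto (fun I : Fin n → ℤ => ‖f I‖ * rpowZ ρ I) cofinite (nhds 0)

/-- A `ℤ`-polytope of `(ℝ₊ˣ)ⁿ`: a compact subset of the positive orthant defined
by a finite disjunction of finite conjunctions of conditions `c ∏ tᵢ^{aᵢ} ≤ 1`
with `aᵢ ∈ ℤ` and `c ∈ ℝ₊ˣ`. -/
def ZPolytope {n : ℕ} (P : Set (Fin n → ℝ)) : Prop :=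
  IsCompact P ∧ (∀ ρ ∈ P, ∀ i, 0 < ρ i) ∧
  ∃ (m l : ℕ) (a : Fin m → Fin l → Fin n → ℤ) (c : Fin m → Fin l → ℝ),
    (∀ p q, 0 < c p q) ∧
    P = {ρ | (∀ i, 0 < ρ i) ∧ ∃ p : Fin m, ∀ q : Fin l, c p q * ∏ i, (ρ i) ^ (a p q i) ≤ 1}

/-- A `ℤ`-piecewise-linear subset of `(ℝ₊ˣ)ⁿ`: a subset of the positive orthant
admitting a G-covering by `ℤ`-polytopes. -/
def IsPLZ {n : ℕ} (U : Set (Fin n → ℝ)) : Prop :=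
  (∀ ρ ∈ U, ∀ i, 0 < ρ i) ∧
  ∃ (ι : Type) (Y : ι → Set (Fin n → ℝ)),
    (∀ i, ZPolytope (Y i)) ∧ (∀ i, Y i ⊆ U) ∧
    ∀ u ∈ U, ∃ s : Finset ι, (∀ i ∈ s, u ∈ Y i) ∧ (⋃ i ∈ s, Y i) ∈ nhdsWithin u U

/-- `f` has a strictly dominant monomial of multidegree `I` on `D_U`. -/
def HasDom {n : ℕ} (U : Set (Fin n → ℝ)) (f : Lser n k) (I : Fin n → ℤ) : Prop :=
  ∀ ρ ∈ U, ∀ J ≠ I, ‖f J‖ * rpowZ ρ J < ‖f I‖ * rpowZ ρ I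

/-- `ℕ`-th power of a Laurent series. -/
noncomputable def lpow {n : ℕ} (f : Lser n k) : ℕ → Lser n k
  | 0 => lone k
  | (m + 1) => lmul k f (lpow f m)

/-- `ℤ`-th power of an invertible Laurent series with chosen inverse `g`. -/
noncomputable def lzpow {n : ℕ} (f g : Lser n k) (m : ℤ) : Lser n k :=
  if 0 ≤ m then lpow k f m.toNat else lpow k g (-m).toNat

/-- Product of a list of Laurent series. -/
noncomputable def lprod {n : ℕ} : List (Lser n k) → Lser n k
  | [] => lone k
  | (x :: t) => lmul k x (lprod t)

/-- Substitution `h ↦ h(f₁, …, fₙ)` of invertible Laurent series (with chosen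
inverses `g i` of the `f i`) into a Laurent series `h`. -/
noncomputable def lsubst {n : ℕ} (f g : Fin n → Lser n k) (h : Lser n k) : Lser n k :=
  fun K => ∑' I : Fin n → ℤ,
    h I * (lprod k (List.ofFn fun i => lzpow k (f i) (g i) (I i))) K

/-- `(f₁, …, fₙ)` is a coordinate system on the lace `D_U`: the `fᵢ` are
invertible elements of `𝒜_U` and substitution along them induces an isomorphism
of `k`-analytic spaces `D_U ≅ D_V` (an isomorphism of algebras `𝒜_V ≅ 𝒜_U`
sending `Tᵢ` to `fᵢ`) for some nonempty connected `ℤ`-piecewise-linear `V`. -/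
def CoordSystem {n : ℕ} (U : Set (Fin n → ℝ)) (f : Fin n → Lser n k) : Prop :=
  ∃ V : Set (Fin n → ℝ), IsPLZ V ∧ V.Nonempty ∧ IsConnected V ∧
  ∃ g : Fin n → Lser n k,
    (∀ i, InA k U (f i) ∧ InA k U (g i) ∧
      lmul k (f i) (g i) = lone k ∧ lmul k (g i) (f i) = lone k) ∧
    Set.BijOn (lsubst k f g) {h | InA k V h} {h | InA k U h} ∧
    (∀ a b : Lser n k, InA k V a → InA k V b →
      lsubst k f g (a + b) = lsubst k f g a + lsubst k f g b ∧
      lsubst k f g (lmul k a b) = lmul k (lsubst k f g a) (lsubst k f g b)) ∧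
    (∀ c : k, lsubst k f g (c • lone k) = c • lone k) ∧
    (∀ i, lsubst k f g (lX k i) = f i)

/-- `u` is spectrally topologically nilpotent on `D_U` (membership in
`𝒜_U^{∘∘}`). -/
def SmallOn {n : ℕ} (U : Set (Fin n → ℝ)) (u : Lser n k) : Prop :=
  ∀ ρ ∈ U, ∃ t : ℝ, t < 1 ∧ ∀ J : Fin n → ℤ, ‖u J‖ * rpowZ ρ J ≤ t

end Lace

theorem not_exists_mul_self_eq_neg_one_of_algEquiv {K L : Type*} [Field K] [CharZero K]
    [Field L] [Algebra K L] (σ : L ≃ₐ[K] L) {i : L} (hi : i * i = -1) (hσi : σ i = -i) :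
    ¬ ∃ x : K, x * x = -1 := by
  rintro ⟨x, hx⟩
  have : CharZero L := (RingHom.charZero_iff (algebraMap K L).injective).mp ‹_›
  set y := algebraMap K L x
  have hy : y * y = -1 := by rw [← map_mul, hx, map_neg, map_one]
  have hi_fixed : σ i = i := by
    rcases mul_eq_zero.mp (show (i - y) * (i + y) = 0 by linear_combination hi - hy) with h | h
    · rw [sub_eq_zero.mp h, σ.commutes]
    · rw [eq_neg_of_add_eq_zero_left h, map_neg, σ.commutes]
  have hi0 : i = 0 := CharZero.neg_eq_self_iff.mp (hσi.symm.trans hi_fixed)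
  simp [hi0] at hi

section Reflection

variable {k : Type*} [NontriviallyNormedField k] {n : ℕ}

def lreflect (σ : k ≃+* k) (h : Lser n k) : Lser n k := fun I => σ (h (-I))

theorem lreflect_lreflect {σ : k ≃+* k} (hσ : Function.Involutive σ) (h : Lser n k) :
    lreflect σ (lreflect σ h) = h := by
  funext I
  simp [lreflect, hσ (h I)]

theorem lreflect_smul (σ : k ≃+* k) (c : k) (h : Lser n k) :
    lreflect σ (c • h) = σ c • lreflect σ h := by
  funext I
  simp [lreflect]

theorem rpowZ_inv_neg (ρ : Fin n → ℝ) (I : Fin n → ℤ) : rpowZ ρ⁻¹ (-I) = rpowZ ρ I := by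
  simp [rpowZ, abs_inv]

theorem rpowZ_one (I : Fin n → ℤ) : rpowZ 1 I = 1 := by
  simp [rpowZ]

theorem rpowZ_pos {ρ : Fin n → ℝ} (hρ : ∀ j, ρ j ≠ 0) (I : Fin n → ℤ) : 0 < rpowZ ρ I :=
  Finset.prod_pos fun j _ => zpow_pos (abs_pos.mpr (hρ j)) _

theorem lreflect_lmul {σ : k ≃+* k} (hσ : ∀ x, ‖σ x‖ = ‖x‖) (g h : Lser n k) :
    lreflect σ (lmul k g h) = lmul k (lreflect σ g) (lreflect σ h) := by
  have hσ_cont : Continuous σ := (AddMonoidHomClass.isometry_of_norm σ hσ).continuous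
  have hσ_symm_cont : Continuous σ.symm :=
    (AddMonoidHomClass.isometry_of_norm σ.symm fun x => by
      rw [← hσ, RingEquiv.apply_symm_apply]).continuous
  funext I
  simp only [lreflect, lmul]
  rw [Function.LeftInverse.map_tsum _ hσ_cont hσ_symm_cont σ.symm_apply_apply,
    ← (Equiv.neg (Fin n → ℤ)).tsum_eq]
  congr 1
  funext J
  simp only [Equiv.neg_apply, map_mul, sub_neg_eq_add, neg_sub']

theorem InA.lreflect {U : Set (Fin n → ℝ)} (hU : ∀ ρ ∈ U, ρ⁻¹ ∈ U) {σ : k ≃+* k}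
    (hσ : ∀ x, ‖σ x‖ = ‖x‖) {h : Lser n k} (hh : InA k U h) : InA k U (lreflect σ h) := by
  intro ρ hρ
  refine ((hh ρ⁻¹ (hU ρ hρ)).comp neg_injective.tendsto_cofinite).congr fun I => ?_
  simp [_root_.lreflect, hσ, rpowZ_inv_neg]

theorem bijOn_lreflect {U : Set (Fin n → ℝ)} (hU : ∀ ρ ∈ U, ρ⁻¹ ∈ U) {σ : k ≃+* k}
    (hσ : ∀ x, ‖σ x‖ = ‖x‖) (hσ_invol : Function.Involutive σ) :
    Set.BijOn (lreflect σ) {h | InA k U h} {h | InA k U h} :=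
  have hmaps : Set.MapsTo (lreflect σ) {h | InA k U h} {h | InA k U h} :=
    fun _ hh => InA.lreflect hU hσ hh
  Set.InvOn.bijOn
    ⟨fun h _ => lreflect_lreflect hσ_invol h, fun h _ => lreflect_lreflect hσ_invol h⟩ hmaps hmaps

theorem lreflect_lmono (σ : k ≃+* k) (I : Fin n → ℤ) :
    lreflect σ (lmono k I) = lmono k (-I) := by
  funext J
  simp only [_root_.lreflect, lmono, neg_eq_iff_eq_neg]
  split_ifs <;> simp

theorem lmul_lmono_apply (I : Fin n → ℤ) (h : Lser n k) (K : Fin n → ℤ) :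
    lmul k (lmono k I) h K = h (K - I) := by
  rw [lmul, tsum_eq_single I fun J hJ => by simp [lmono, hJ]]
  simp [lmono]

theorem inA_lmono (U : Set (Fin n → ℝ)) (I : Fin n → ℤ) : InA k U (lmono k I) := by
  intro ρ _
  refine tendsto_const_nhds.congr' ?_
  filter_upwards [(Set.finite_singleton I).compl_mem_cofinite] with J hJ
  simp [lmono, Set.mem_compl_singleton_iff.mp hJ]

theorem hasDom_lmono {U : Set (Fin n → ℝ)} (hU : ∀ ρ ∈ U, ∀ j, ρ j ≠ 0) (I : Fin n → ℤ) :
    HasDom k U (lmono k I) I := by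
  intro ρ hρ J hJ
  simpa [lmono, hJ] using rpowZ_pos (hU ρ hρ) I

theorem SmallOn.norm_apply_zero_lt_one {U : Set (Fin n → ℝ)} {u : Lser n k}
    (hu : SmallOn k U u) (hU : U.Nonempty) : ‖u 0‖ < 1 := by
  obtain ⟨ρ, hρ⟩ := hU
  obtain ⟨t, ht, hbound⟩ := hu ρ hρ
  have := hbound 0
  simp only [rpowZ, Pi.zero_apply, zpow_zero, Finset.prod_const_one, mul_one] at this
  linarith

/-- Distinct monomials have distinct classes in the lattice `𝒜ˣ/kˣ(1+𝒜^{∘∘})`. -/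
theorem lmono_ne_smul_lmul_lmono_one_add {U : Set (Fin n → ℝ)} (hU : U.Nonempty)
    {I J : Fin n → ℤ} (hIJ : J ≠ I) {c : k} {u : Lser n k} (hu : SmallOn k U u) :
    lmono k J ≠ c • lmul k (lmono k I) (lone k + u) := by
  intro h
  have hcoeff := congrFun h I
  simp only [lmono, if_neg hIJ.symm, Pi.smul_apply, lmul_lmono_apply, sub_self, Pi.add_apply,
    lone, if_true, smul_eq_mul] at hcoeff
  rcases mul_eq_zero.mp hcoeff.symm with hc | hu0
  · simpa [hc, lmono] using congrFun h J
  · have := hu.norm_apply_zero_lt_one hU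
    rw [eq_neg_of_add_eq_zero_right hu0, norm_neg, norm_one] at this
    exact lt_irrefl _ this

theorem not_hasDom_of_lreflect_eq_self {U : Set (Fin n → ℝ)} (hU : 1 ∈ U) {σ : k ≃+* k}
    (hσ : ∀ x, ‖σ x‖ = ‖x‖) {f : Lser n k} (hf : lreflect σ f = f) {I : Fin n → ℤ}
    (hI : I ≠ 0) : ¬ HasDom k U f I := by
  intro hdom
  have hlt := hdom 1 hU (-I)
    fun h => hI (funext fun j => CharZero.neg_eq_self_iff.mp (congrFun h j))
  have hnorm : ‖f (-I)‖ = ‖f I‖ := by rw [← hσ, ← congrFun hf I, _root_.lreflect]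
  rw [rpowZ_one, rpowZ_one, hnorm] at hlt
  exact lt_irrefl _ hlt

end Reflection

theorem statement19_general
    (L : Type*) [NontriviallyNormedField L]
    [NormedAlgebra ℚ_[3] L]
    (i : L) (hi : i * i = -1)
    (σ : L ≃ₐ[ℚ_[3]] L) (hσi : σ i = -i) (hσ2 : ∀ x, σ (σ x) = x)
    (hσn : ∀ x : L, ‖σ x‖ = ‖x‖)
    (U : Set (Fin 1 → ℝ)) (hUdef : U = {ρ | 2⁻¹ ≤ ρ 0 ∧ ρ 0 ≤ 2})
    (act : Lser 1 L → Lser 1 L) (hact : act = fun h I => σ (h (-I))) :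
    -- `-1` is not a square in `ℚ₃`:
    (¬ ∃ x : ℚ_[3], x * x = -1) ∧
    -- `act` is a semilinear involutive automorphism of `ℬ = 𝒜_U(L)`:
    (∀ h : Lser 1 L, act (act h) = h) ∧
    (∀ (c : L) (h : Lser 1 L), act (c • h) = (σ c) • act h) ∧
    (∀ g h : Lser 1 L, InA L U g → InA L U h →
      act (lmul L g h) = lmul L (act g) (act h)) ∧
    Set.BijOn act {h | InA L U h} {h | InA L U h} ∧
    -- `X_L` is an `L`-annulus with coordinate `lX 0`:
    InA L U (lX L 0) ∧ HasDom L U (lX L 0) (Pi.single 0 1) ∧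
    -- the Galois action reverses the monomial exponent of the coordinate …
    act (lX L 0) = lmono L (-Pi.single 0 1) ∧
    -- … so it does not act trivially on the lattice of `X_L` …
    (¬ ∃ (c : L) (u : Lser 1 L), c ≠ 0 ∧ InA L U u ∧ SmallOn L U u ∧
        act (lX L 0) = c • lmul L (lX L 0) (lone L + u)) ∧
    -- … and `X` is not a `ℚ₃`-annulus: no Galois-invariant coordinate exists:
    (¬ ∃ f : Lser 1 L, act f = f ∧ InA L U f ∧
        (∃ g : Lser 1 L, InA L U g ∧ lmul L f g = lone L ∧ lmul L g f = lone L) ∧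
        (∃ I : Fin 1 → ℤ, HasDom L U f I ∧ (I 0 = 1 ∨ I 0 = -1))) := by
  obtain rfl : act = lreflect (σ : L ≃+* L) := hact
  have hσ_invol : Function.Involutive (σ : L ≃+* L) := hσ2
  have hU_inv : ∀ ρ ∈ U, ρ⁻¹ ∈ U := by
    rw [hUdef]
    rintro ρ ⟨hlo, hhi⟩
    have hρ : 0 < ρ 0 := lt_of_lt_of_le (by norm_num) hlo
    exact ⟨by simpa using inv_anti₀ hρ hhi, by simpa using inv_anti₀ (by norm_num) hlo⟩
  have hU_ne : ∀ ρ ∈ U, ∀ j, ρ j ≠ 0 := by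
    rw [hUdef]
    rintro ρ ⟨hlo, -⟩ j
    rw [Subsingleton.elim j 0]
    exact (lt_of_lt_of_le (by norm_num) hlo).ne'
  have hU_one : (1 : Fin 1 → ℝ) ∈ U := by rw [hUdef]; norm_num
  have hact_lX : lreflect (σ : L ≃+* L) (lX L 0) = lmono L (-Pi.single (0 : Fin 1) 1) :=
    lreflect_lmono _ _
  refine ⟨not_exists_mul_self_eq_neg_one_of_algEquiv σ hi hσi, lreflect_lreflect hσ_invol,
    lreflect_smul _, fun g h _ _ => lreflect_lmul hσn g h, bijOn_lreflect hU_inv hσn hσ_invol,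
    inA_lmono _ _, hasDom_lmono hU_ne _, hact_lX, ?_, ?_⟩
  · rintro ⟨c, u, -, -, hu, h⟩
    refine lmono_ne_smul_lmul_lmono_one_add ⟨1, hU_one⟩ (fun h => ?_) hu (hact_lX ▸ h)
    simpa using congrFun h 0
  · rintro ⟨f, hf, -, -, I, hdom, hI⟩
    refine not_hasDom_of_lreflect_eq_self hU_one hσn hf (fun h => ?_) hdom
    rcases hI with hI | hI <;> simp [h] at hI

/-- **A tame form of an annulus which is not an annulus.**
Take `k = ℚ₃` and `L = ℚ₃[i]` (modelled by a complete ultrametric normed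
`ℚ₃`-algebra field of degree `2` containing a square root `i` of `-1`, with
Galois conjugation `σ`).  The `ℚ₃`-analytic space
`X = {x ∈ ℙ¹ : 1/4 ≤ |(T²+1)(x)|}` satisfies
`X_L = {1/2 ≤ |f| ≤ 2}` with coordinate `f = (T+i)/(T-i)`, an `L`-annulus of
type `U = [1/2, 2]`; the Galois action on `X_L` is, in the coordinate `f`, the
semilinear involution `act` reversing the orientation of the skeleton
(`f ↦ σ(f)`, the monomial exponent being reversed).  Then: `-1` is not a square
in `ℚ₃` (so `L/ℚ₃` is a genuine quadratic — unramified, hence tame — Galois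
extension); `act` is a semilinear involutive automorphism of
`ℬ = 𝒜_U(L)`; it does NOT act trivially on the lattice of `X_L` (the class of
the coordinate `lX 0` is not preserved); and no `act`-invariant coordinate on
`X_L` exists — `X` is not a `ℚ₃`-annulus although `X_L` is an `L`-annulus.
Hence the lattice-triviality hypothesis in the descent theorem for laces cannot
be dropped. -/
theorem statement19
    (L : Type*) [NontriviallyNormedField L] [IsUltrametricDist L] [CompleteSpace L]
    [NormedAlgebra ℚ_[3] L]
    (hrank : Module.finrank ℚ_[3] L = 2)
    (i : L) (hi : i * i = -1)
    (σ : L ≃ₐ[ℚ_[3]] L) (hσi : σ i = -i) (hσ2 : ∀ x, σ (σ x) = x)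
    (hσn : ∀ x : L, ‖σ x‖ = ‖x‖)
    (U : Set (Fin 1 → ℝ)) (hUdef : U = {ρ | 2⁻¹ ≤ ρ 0 ∧ ρ 0 ≤ 2})
    (act : Lser 1 L → Lser 1 L) (hact : act = fun h I => σ (h (-I))) :
    -- `-1` is not a square in `ℚ₃`:
    (¬ ∃ x : ℚ_[3], x * x = -1) ∧
    -- `act` is a semilinear involutive automorphism of `ℬ = 𝒜_U(L)`:
    (∀ h : Lser 1 L, act (act h) = h) ∧
    (∀ (c : L) (h : Lser 1 L), act (c • h) = (σ c) • act h) ∧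
    (∀ g h : Lser 1 L, InA L U g → InA L U h →
      act (lmul L g h) = lmul L (act g) (act h)) ∧
    Set.BijOn act {h | InA L U h} {h | InA L U h} ∧
    -- `X_L` is an `L`-annulus with coordinate `lX 0`:
    InA L U (lX L 0) ∧ HasDom L U (lX L 0) (Pi.single 0 1) ∧
    -- the Galois action reverses the monomial exponent of the coordinate …
    act (lX L 0) = lmono L (-Pi.single 0 1) ∧
    -- … so it does not act trivially on the lattice of `X_L` …
    (¬ ∃ (c : L) (u : Lser 1 L), c ≠ 0 ∧ InA L U u ∧ SmallOn L U u ∧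
        act (lX L 0) = c • lmul L (lX L 0) (lone L + u)) ∧
    -- … and `X` is not a `ℚ₃`-annulus: no Galois-invariant coordinate exists:
    (¬ ∃ f : Lser 1 L, act f = f ∧ InA L U f ∧
        (∃ g : Lser 1 L, InA L U g ∧ lmul L f g = lone L ∧ lmul L g f = lone L) ∧
        (∃ I : Fin 1 → ℤ, HasDom L U f I ∧ (I 0 = 1 ∨ I 0 = -1))) :=
  statement19_general L i hi σ hσi hσ2 hσn U hUdef act hact
end
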